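/- Let q, p_1, p_2 be conjunctive queries over a schema R with the same head predicate, and suppose that for each i ∈ {1,2} every variable of var(p_i) ∖ var(q) occurs exactly once in p_i. Let ⋆ be a fixed fresh symbol and, for a CQ p, let p^⋆ denote the query obtained from p by replacing every variable of var(p) ∖ var(q) with ⋆. If p_1^⋆ = p_2^⋆, then p_1 and p_2 are the same query up to bijective variable renaming. -/
import Mathlib


namespace OntDB

/-- Terms: constants, labeled nulls, and variables (each indexed by naturals). -/
inductive Term : Type
  | const : ℕ → Term
  | null  : ℕ → Term
  | var   : ℕ → Term
deriving DecidableEq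

/-- a term is not a labeled null -/
def Term.noNull : Term → Prop
  | .null _ => False
  | _ => True

/-- Atoms: a predicate symbol applied to a list of argument terms. -/
structure Atom : Type where
  pred : ℕ
  args : List Term
deriving DecidableEq

/-- A relational schema: a finite set of predicate symbols, each with an arity. -/
structure Schema : Type where
  preds : Finset ℕ
  ar : ℕ → ℕ

/-- arity(R) : the maximum arity over the predicates of R -/
def Schema.maxArity (R : Schema) : ℕ := R.preds.sup R.ar

def Atom.overSchema (R : Schema) (a : Atom) : Prop :=
  a.pred ∈ R.preds ∧ a.args.length = R.ar a.pred

/-- applying a substitution to an atom -/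
def Atom.subst (h : Term → Term) (a : Atom) : Atom := ⟨a.pred, a.args.map h⟩

/-- a substitution fixes every constant -/
def constFix (h : Term → Term) : Prop := ∀ c, h (Term.const c) = Term.const c

/-- A homomorphism from the set of atoms `A` to the set of atoms `A'`. -/
def IsHom (h : Term → Term) (A A' : Set Atom) : Prop :=
  constFix h ∧ ∀ a ∈ A, a.subst h ∈ A'

/-- the variables occurring in an atom -/
def Atom.vars (a : Atom) : Finset ℕ :=
  (a.args.filterMap (fun t => match t with | .var v => some v | _ => none)).toFinset

/-- the number of occurrences of the variable `v` in the atom `a` -/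
def Atom.countVar (a : Atom) (v : ℕ) : ℕ := a.args.count (Term.var v)

/-- the variables occurring in a finite set of atoms -/
def varsOfSet (S : Finset Atom) : Finset ℕ := S.sup Atom.vars

/-- A conjunctive query: a head atom together with a finite set of body atoms. -/
structure CQ : Type where
  head : Atom
  body : Finset Atom
deriving DecidableEq

/-- the variables occurring in a CQ (head and body) -/
def CQ.vars (q : CQ) : Finset ℕ := q.head.vars ∪ varsOfSet q.body

/-- the number of occurrences of the variable `v` in the CQ `q` (head and body) -/
def CQ.countVar (q : CQ) (v : ℕ) : ℕ := q.head.countVar v + ∑ a ∈ q.body, a.countVar v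

/-- a variable is shared in `q` if it occurs more than once in `q` -/
def CQ.shared (q : CQ) (v : ℕ) : Prop := 2 ≤ q.countVar v

/-- a CQ over a schema: body atoms over the schema, and no labeled nulls occur -/
def CQ.overSchema (R : Schema) (q : CQ) : Prop :=
  (∀ a ∈ q.body, a.overSchema R ∧ ∀ t ∈ a.args, t.noNull) ∧ ∀ t ∈ q.head.args, t.noNull

/-- a tuple of constants -/
def isConstTuple (t : List Term) : Prop := ∀ s ∈ t, ∃ c, s = Term.const c

/-- Evaluation of a CQ over an instance: the tuples of constants obtained as images
of the distinguished terms under homomorphisms of the body into the instance. -/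
def CQ.eval (q : CQ) (I : Set Atom) : Set (List Term) :=
  { t | isConstTuple t ∧ ∃ h : Term → Term, IsHom h ↑q.body I ∧ q.head.args.map h = t }

/-- evaluation of a (possibly infinite) union of CQs -/
def ucqEval (Q : Set CQ) (I : Set Atom) : Set (List Term) := ⋃ q ∈ Q, q.eval I

/-- A TGD (in normal form representation): a finite set of body atoms plus a single
head atom; the existentially quantified variables are exactly the head variables
that do not occur in the body. -/
structure TGD : Type where
  body : Finset Atom
  head : Atom
deriving DecidableEq

/-- the universally quantified variables occurring in the head -/
def TGD.frontier (σ : TGD) : Finset ℕ := varsOfSet σ.body ∩ σ.head.vars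

/-- the existentially quantified variables -/
def TGD.exVars (σ : TGD) : Finset ℕ := σ.head.vars \ varsOfSet σ.body

def TGD.vars (σ : TGD) : Finset ℕ := varsOfSet σ.body ∪ σ.head.vars

/-- normal form: at most one existentially quantified variable, occurring once -/
def TGD.NormalForm (σ : TGD) : Prop :=
  σ.exVars.card ≤ 1 ∧ ∀ v ∈ σ.exVars, σ.head.countVar v = 1

/-- a TGD is linear if its body consists of a single atom -/
def TGD.Linear (σ : TGD) : Prop := σ.body.card = 1

/-- a set of TGDs is linear if all its members are -/
def LinearSet (Sig : Finset TGD) : Prop := ∀ σ ∈ Sig, σ.Linear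

def TGD.overSchema (R : Schema) (σ : TGD) : Prop :=
  σ.body.Nonempty ∧ (∀ a ∈ σ.body, a.overSchema R ∧ ∀ t ∈ a.args, t.noNull) ∧
  σ.head.overSchema R ∧ ∀ t ∈ σ.head.args, t.noNull

/-- satisfaction of a TGD by an instance -/
def TGD.sat (σ : TGD) (I : Set Atom) : Prop :=
  ∀ h : Term → Term, IsHom h ↑σ.body I →
    ∃ h' : Term → Term, constFix h' ∧
      (∀ v ∈ σ.frontier, h' (Term.var v) = h (Term.var v)) ∧ σ.head.subst h' ∈ I

/-- satisfaction of a set of TGDs -/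
def satSet (Sig : Finset TGD) (I : Set Atom) : Prop := ∀ σ ∈ Sig, σ.sat I

/-- a database for a schema: a finite set of atoms over the schema whose
arguments are constants -/
def IsDatabase (R : Schema) (D : Finset Atom) : Prop :=
  ∀ a ∈ D, a.overSchema R ∧ ∀ t ∈ a.args, ∃ c, t = Term.const c

/-- the certain answers of a CQ w.r.t. a database and a set of TGDs -/
def certAns (q : CQ) (D : Finset Atom) (Sig : Finset TGD) : Set (List Term) :=
  { t | ∀ I : Set Atom, ↑D ⊆ I → satSet Sig I → t ∈ q.eval I }

/-- the certain answers of a (possibly infinite) union of CQs -/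
def certAnsUCQ (Q : Set CQ) (D : Finset Atom) (Sig : Finset TGD) : Set (List Term) :=
  { t | ∀ I : Set Atom, ↑D ⊆ I → satSet Sig I → t ∈ ucqEval Q I }

/-- a unifier for a finite set of atoms -/
def IsUnifier (γ : Term → Term) (S : Finset Atom) : Prop :=
  constFix γ ∧ ∀ a ∈ S, ∀ b ∈ S, a.subst γ = b.subst γ

def Unifies (S : Finset Atom) : Prop := ∃ γ, IsUnifier γ S

/-- most general unifier -/
def IsMGU (γ : Term → Term) (S : Finset Atom) : Prop :=
  IsUnifier γ S ∧ ∀ γ', IsUnifier γ' S → ∃ δ : Term → Term, ∀ t, γ' t = δ (γ t)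

/-- `i` is the position of the existentially quantified variable in head(σ) -/
def TGD.exPos (σ : TGD) (i : ℕ) : Prop :=
  ∃ z ∈ σ.exVars, σ.head.args[i]? = some (Term.var z)

/-- applicability of the TGD σ to the set S ⊆ body(q) -/
def Applicable (q : CQ) (σ : TGD) (S : Finset Atom) : Prop :=
  S.Nonempty ∧ S ⊆ q.body ∧ Unifies (S ∪ {σ.head}) ∧
  ∀ a ∈ S, ∀ i, σ.exPos i →
    (∀ c, a.args[i]? ≠ some (Term.const c)) ∧
    ∀ v, a.args[i]? = some (Term.var v) → ¬ q.shared v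

/-- factorizability of the set S ⊆ body(q) w.r.t. the TGD σ -/
def Factorizable (q : CQ) (σ : TGD) (S : Finset Atom) : Prop :=
  S ⊆ q.body ∧ 2 ≤ S.card ∧ Unifies S ∧ (∃ i, σ.exPos i) ∧
  ∃ V : ℕ, V ∉ varsOfSet (q.body \ S) ∧
    ∀ a ∈ S, (∃ i, σ.exPos i ∧ a.args[i]? = some (Term.var V)) ∧
      ∀ j, a.args[j]? = some (Term.var V) → σ.exPos j

/-- renaming of variables -/
def renT (ρ : ℕ → ℕ) : Term → Term
  | .var v => .var (ρ v)
  | t => t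

/-- renaming the variables of a TGD -/
def TGD.rename (σ : TGD) (ρ : ℕ → ℕ) : TGD :=
  ⟨σ.body.image (Atom.subst (renT ρ)), σ.head.subst (renT ρ)⟩

/-- applying a substitution to a CQ -/
def CQ.subst (q : CQ) (γ : Term → Term) : CQ :=
  ⟨q.head.subst γ, q.body.image (Atom.subst γ)⟩

/-- the restriction on MGUs used by XRewrite under sticky sets of TGDs:
every variable of the protected set `W` (the variables of the input query) is
mapped to a variable of `W` (or to a constant).  For `W = ∅` no restriction. -/
def ProtectsVars (W : Finset ℕ) (γ : Term → Term) : Prop :=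
  ∀ v ∈ W, (∃ u ∈ W, γ (Term.var v) = Term.var u) ∨ ∃ c, γ (Term.var v) = Term.const c

/-- the substitution is the identity on all variables outside `V` -/
def IdOutside (V : Finset ℕ) (γ : Term → Term) : Prop :=
  ∀ v, v ∉ V → γ (Term.var v) = Term.var v

/-- one rewriting step of XRewrite (applied to `q`, producing `q'`) -/
def IsRewriteStep (Sig : Finset TGD) (W : Finset ℕ) (q q' : CQ) : Prop :=
  ∃ σ ∈ Sig, ∃ ρ : ℕ → ℕ, Function.Injective ρ ∧ (∀ v, ρ v ∉ q.vars) ∧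
    ∃ S : Finset Atom, Applicable q (σ.rename ρ) S ∧
      ∃ γ : Term → Term, IsMGU γ (S ∪ {(σ.rename ρ).head}) ∧
        IdOutside (varsOfSet (S ∪ {(σ.rename ρ).head})) γ ∧ ProtectsVars W γ ∧
        q' = (CQ.mk q.head ((q.body \ S) ∪ (σ.rename ρ).body)).subst γ

/-- one factorization step of XRewrite -/
def IsFactStep (Sig : Finset TGD) (W : Finset ℕ) (q q' : CQ) : Prop :=
  ∃ σ ∈ Sig, ∃ S : Finset Atom, Factorizable q σ S ∧
    ∃ γ : Term → Term, IsMGU γ S ∧ IdOutside (varsOfSet S) γ ∧ ProtectsVars W γ ∧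
      q' = q.subst γ

/-- the CQs obtainable from q by a finite sequence of rewriting and
factorization steps -/
inductive Reach (Sig : Finset TGD) (W : Finset ℕ) (q : CQ) : CQ → Prop
  | refl : Reach Sig W q q
  | rw {p p' : CQ} : Reach Sig W q p → IsRewriteStep Sig W p p' → Reach Sig W q p'
  | fact {p p' : CQ} : Reach Sig W q p → IsFactStep Sig W p p' → Reach Sig W q p'

/-- the output of XRewrite(q,Σ): q together with all CQs obtainable from q by a
finite sequence of rewriting and factorization steps whose last step is a
rewriting step -/
def XRewriteOut (Sig : Finset TGD) (W : Finset ℕ) (q : CQ) : Set CQ :=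
  {q} ∪ { p' | ∃ p : CQ, Reach Sig W q p ∧ IsRewriteStep Sig W p p' }

/-- two CQs are the same up to bijective variable renaming -/
def CQEquiv (p p' : CQ) : Prop :=
  ∃ ρ : ℕ → ℕ, Function.Bijective ρ ∧ p.subst (renT ρ) = p'

/-- the SMarking procedure: `Marked Sig σ v` says that the body variable `v` of
σ gets marked -/
inductive Marked (Sig : Finset TGD) : TGD → ℕ → Prop
  | init {σ : TGD} {v : ℕ} : σ ∈ Sig → v ∈ varsOfSet σ.body → v ∉ σ.head.vars →
      Marked Sig σ v
  | prop {σ σ' : TGD} {v : ℕ} (b : Atom) (u : ℕ → ℕ) : σ ∈ Sig → σ' ∈ Sig →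
      v ∈ varsOfSet σ.body → v ∈ σ.head.vars → b ∈ σ'.body →
      (∀ i : ℕ, σ.head.args[i]? = some (Term.var v) →
        b.args[i]? = some (Term.var (u i))) →
      (∀ i : ℕ, σ.head.args[i]? = some (Term.var v) → Marked Sig σ' (u i)) →
      Marked Sig σ v

/-- a set of TGDs is sticky if every marked variable occurs only once in the
body of its TGD -/
def Sticky (Sig : Finset TGD) : Prop :=
  ∀ σ ∈ Sig, ∀ v : ℕ, Marked Sig σ v → (∑ a ∈ σ.body, a.countVar v) = 1

/- ## Propagation graph and atom coverage -/

/-- a position of a schema: a predicate together with an argument index -/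
abbrev Pos := ℕ × ℕ

/-- the edges of the propagation graph -/
def PGEdge (σ : TGD) (pb ph : Pos) : Prop :=
  ∃ b ∈ σ.body, ∃ v : ℕ,
    b.pred = pb.1 ∧ b.args[pb.2]? = some (Term.var v) ∧
    σ.head.pred = ph.1 ∧ σ.head.args[ph.2]? = some (Term.var v)

/-- `vs` is a path in the propagation graph of Σ with edge labels `ls` -/
def IsPath (Sig : Finset TGD) (vs : List Pos) (ls : List TGD) : Prop :=
  vs.length = ls.length + 1 ∧
  ∀ j < ls.length, ∃ σ pb ph,
    ls[j]? = some σ ∧ vs[j]? = some pb ∧ vs[j + 1]? = some ph ∧ σ ∈ Sig ∧ PGEdge σ pb ph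

/-- a minimal path: no cycle is traversed twice consecutively -/
def MinimalPath (Sig : Finset TGD) (vs : List Pos) (ls : List TGD) : Prop :=
  IsPath Sig vs ls ∧
  ¬ ∃ i j : ℕ, 0 < i ∧ i + 1 < vs.length ∧ 0 < j ∧ j ≤ i ∧ i + j < vs.length ∧
      (∀ k ≤ j, vs[i - j + k]? = vs[i + k]?) ∧ ∀ k < j, ls[i - j + k]? = ls[i + k]?

/-- a tight sequence of (linear) TGDs -/
def TightSeq (σs : List TGD) : Prop :=
  ∀ j, j + 1 < σs.length →
    ∃ σ1 σ2, σs[j]? = some σ1 ∧ σs[j + 1]? = some σ2 ∧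
      ∃ h : Term → Term, constFix h ∧ σ2.body.image (Atom.subst h) = {σ1.head}

/-- a sequence of TGDs compatible to an atom -/
def CompatibleTo (σs : List TGD) (a : Atom) : Prop :=
  ∃ σ1, σs[0]? = some σ1 ∧ ∃ h : Term → Term, constFix h ∧
    σ1.body.image (Atom.subst h) = {a}

/-- pos(a,t): the positions (indices) at which the term t occurs in the atom a -/
def atomPos (a : Atom) (t : Term) : Set ℕ := { i | a.args[i]? = some t }

/-- T(q,a): the constants of a together with the variables of a shared in q -/
def Tq (q : CQ) (a : Atom) : Set Term :=
  { t | t ∈ a.args ∧ ((∃ c, t = Term.const c) ∨ ∃ v, t = Term.var v ∧ q.shared v) }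

/-- atom coverage: a covers b w.r.t. q and Σ -/
def Covers (Sig : Finset TGD) (q : CQ) (a b : Atom) : Prop :=
  (∀ t ∈ Tq q b, t ∈ a.args) ∧
  ∃ σs : List TGD, σs ≠ [] ∧ (∀ σ ∈ σs, σ ∈ Sig) ∧ TightSeq σs ∧ CompatibleTo σs a ∧
    ∀ t ∈ Tq q b, ∀ i ∈ atomPos b t,
      ∃ vs : List Pos, MinimalPath Sig vs σs ∧
        (∃ p0 : Pos, vs[0]? = some p0 ∧ p0.1 = a.pred ∧ p0.2 ∈ atomPos a t) ∧
        vs[vs.length - 1]? = some (b.pred, i)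


/-- conjunctive queries with bodies taken as multisets of atoms (conjunctions) -/
structure MCQ : Type where
  head : Atom
  body : Multiset Atom

def MCQ.subst (p : MCQ) (h : Term → Term) : MCQ :=
  ⟨p.head.subst h, p.body.map (Atom.subst h)⟩

/-- the variables occurring in an MCQ -/
def MCQ.varFinset (p : MCQ) : Finset ℕ := p.head.vars ∪ (p.body.map Atom.vars).sup

/-- the number of occurrences of the variable v in p (head and body) -/
def MCQ.countVar (p : MCQ) (v : ℕ) : ℕ :=
  p.head.countVar v + (p.body.map (fun a => a.countVar v)).sum

/-- no labeled null occurs in p (so that the null `Term.null 0` used as the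
symbol ⋆ is fresh) -/
def MCQ.noNulls (p : MCQ) : Prop :=
  (∀ t ∈ p.head.args, t.noNull) ∧ ∀ a ∈ p.body, ∀ t ∈ a.args, t.noNull

/-- replace every variable outside W by the fixed fresh symbol ⋆ -/
def starSub (W : Finset ℕ) : Term → Term
  | .var v => if v ∈ W then .var v else .null 0
  | t => t

/-- two MCQs are the same up to bijective variable renaming -/
def MCQEquiv (p p' : MCQ) : Prop :=
  ∃ ρ : ℕ → ℕ, Function.Bijective ρ ∧ p.subst (renT ρ) = p'

-- AUX START
private lemma count_flatMap_eq {α β} [DecidableEq β] (l : List α) (f : α → List β) (b : β) :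
    (l.flatMap f).count b = (l.map (fun a => (f a).count b)).sum := by
  induction l with
  | nil => simp
  | cons x xs ih => simp [List.flatMap_cons, List.count_append, ih]

private lemma two_le_count_of_lt {α} [DecidableEq α] :
    ∀ (l : List α) (a : α) (i j : ℕ), i < j → l[i]? = some a → l[j]? = some a →
      2 ≤ l.count a := by
  intro l
  induction l with
  | nil => intro a i j _ hi _; simp at hi
  | cons x xs ih =>
    intro a i j hij hi hj
    match i, j with
    | 0, j+1 =>
      simp only [List.getElem?_cons_zero, Option.some.injEq] at hi
      have hmem : a ∈ xs := List.mem_of_getElem? (by simpa using hj)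
      have h1 : 0 < xs.count a := List.count_pos_iff.mpr hmem
      rw [hi, List.count_cons_self]
      omega
    | i+1, j+1 =>
      have h2 := ih a i j (by omega) (by simpa using hi) (by simpa using hj)
      have h3 : xs.count a ≤ (x :: xs).count a := by
        rw [List.count_cons]; exact Nat.le_add_right _ _
      omega

private lemma eq_of_count_one {α} [DecidableEq α] {l : List α} {a : α} (h : l.count a = 1)
    {i j : ℕ} (hi : l[i]? = some a) (hj : l[j]? = some a) : i = j := by
  rcases Nat.lt_trichotomy i j with h' | h' | h'
  · have := two_le_count_of_lt l a i j h' hi hj; omega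
  · exact h'
  · have := two_le_count_of_lt l a j i h' hj hi; omega

private lemma rel_exists_lists {α β} {r : α → β → Prop} {s : Multiset α} {t : Multiset β}
    (h : Multiset.Rel r s t) :
    ∃ (l₁ : List α) (l₂ : List β), s = (l₁ : Multiset α) ∧ t = (l₂ : Multiset β) ∧ List.Forall₂ r l₁ l₂ := by
  induction h with
  | zero => exact ⟨[], [], rfl, rfl, List.Forall₂.nil⟩
  | @cons a b s t hab _ ih =>
    obtain ⟨l₁, l₂, rfl, rfl, hf⟩ := ih
    exact ⟨a :: l₁, b :: l₂, by rw [Multiset.cons_coe], by rw [Multiset.cons_coe],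
      List.Forall₂.cons hab hf⟩

private lemma star_cases {W : Finset ℕ} {t₁ t₂ : Term} (h₁ : t₁.noNull) (h₂ : t₂.noNull)
    (h : starSub W t₁ = starSub W t₂) :
    (∃ c, t₁ = .const c ∧ t₂ = .const c) ∨
    (∃ v, v ∈ W ∧ t₁ = .var v ∧ t₂ = .var v) ∨
    (∃ x y, x ∉ W ∧ y ∉ W ∧ t₁ = .var x ∧ t₂ = .var y) := by
  cases t₁ with
  | null n => exact absurd h₁ (by simp [Term.noNull])
  | const c =>
    cases t₂ with
    | null n => exact absurd h₂ (by simp [Term.noNull])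
    | const d => simp only [starSub, Term.const.injEq] at h; exact Or.inl ⟨c, rfl, by rw [h]⟩
    | var y =>
      simp only [starSub] at h
      split at h <;> simp at h
  | var x =>
    cases t₂ with
    | null n => exact absurd h₂ (by simp [Term.noNull])
    | const d =>
      simp only [starSub] at h
      split at h <;> simp at h
    | var y =>
      simp only [starSub] at h
      by_cases hx : x ∈ W <;> by_cases hy : y ∈ W <;> simp only [hx, hy, if_true, if_false] at h
      · exact Or.inr (Or.inl ⟨x, hx, rfl, by rw [show x = y from by injection h]⟩)
      · exact absurd h (by simp)
      · exact absurd h (by simp)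
      · exact Or.inr (Or.inr ⟨x, y, hx, hy, rfl, rfl⟩)

private lemma mem_atom_vars {a : Atom} {v : ℕ} (h : Term.var v ∈ a.args) : v ∈ a.vars := by
  simp only [Atom.vars, List.mem_toFinset, List.mem_filterMap]
  exact ⟨Term.var v, h, rfl⟩

private lemma mem_varFinset_of {p : MCQ} {L : List Atom} (hL : p.body = ↑L) {v : ℕ}
    (h : Term.var v ∈ p.head.args ++ L.flatMap Atom.args) : v ∈ p.varFinset := by
  rcases List.mem_append.mp h with h | h
  · exact Finset.mem_union_left _ (mem_atom_vars h)
  · obtain ⟨a, ha, hv⟩ := List.mem_flatMap.mp h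
    apply Finset.mem_union_right
    have h1 : a.vars ∈ p.body.map Atom.vars := by
      rw [hL, Multiset.map_coe]
      exact Multiset.mem_coe.mpr (List.mem_map.mpr ⟨a, ha, rfl⟩)
    exact (Multiset.le_sup h1 : a.vars ≤ _) (mem_atom_vars hv)

private lemma countVar_eq {p : MCQ} {L : List Atom} (hL : p.body = ↑L) (v : ℕ) :
    p.countVar v = (p.head.args ++ L.flatMap Atom.args).count (Term.var v) := by
  simp [MCQ.countVar, Atom.countVar, hL, Multiset.map_coe, Multiset.sum_coe,
    List.count_append, count_flatMap_eq]

private lemma flatMap_star_eq (st : Term → Term) :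
    ∀ {L₁ L₂ : List Atom}, List.Forall₂ (fun a b : Atom => a.subst st = b.subst st) L₁ L₂ →
      (L₁.flatMap Atom.args).map st = (L₂.flatMap Atom.args).map st := by
  intro L₁ L₂ h
  induction h with
  | nil => rfl
  | cons hab _ ih =>
    simp only [List.flatMap_cons, List.map_append, ih]
    have := congrArg Atom.args hab
    simp only [Atom.subst] at this
    rw [this]

private lemma body_reconstruct (st h : Term → Term) :
    ∀ {L₁ L₂ : List Atom}, List.Forall₂ (fun a b : Atom => a.subst st = b.subst st) L₁ L₂ →
      (L₁.flatMap Atom.args).map h = L₂.flatMap Atom.args →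
      L₁.map (Atom.subst h) = L₂ := by
  intro L₁ L₂ hf
  induction hf with
  | nil => intro _; rfl
  | @cons a b l₁ l₂ hab _ ih =>
    intro hmap
    simp only [List.flatMap_cons, List.map_append] at hmap
    have hlen : (a.args.map h).length = b.args.length := by
      have := congrArg (fun x => x.args.length) hab
      simpa [Atom.subst] using this
    obtain ⟨h1, h2⟩ := List.append_inj hmap hlen
    have hpred : a.pred = b.pred := by
      have := congrArg Atom.pred hab; simpa [Atom.subst] using this
    simp only [List.map_cons, ih h2, List.cons.injEq, and_true]
    show Atom.mk a.pred (a.args.map h) = b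
    rw [hpred, h1]

def freshVars (W : Finset ℕ) (T : List Term) : Finset ℕ :=
  (T.filterMap (fun t => match t with
    | .var v => if v ∈ W then none else some v
    | _ => none)).toFinset

private lemma mem_freshVars {W : Finset ℕ} {T : List Term} {v : ℕ} :
    v ∈ freshVars W T ↔ Term.var v ∈ T ∧ v ∉ W := by
  simp only [freshVars, List.mem_toFinset, List.mem_filterMap]
  constructor
  · rintro ⟨t, ht, he⟩
    cases t with
    | var u =>
      simp only at he
      split at he
      · simp at he
      · simp only [Option.some.injEq] at he; subst he; exact ⟨ht, by assumption⟩
    | const c => simp at he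
    | null n => simp at he
  · rintro ⟨ht, hv⟩
    exact ⟨Term.var v, ht, by simp [hv]⟩


/-- if two CQs whose variables outside var(q) occur exactly once
have the same ⋆-replacement, then they coincide up to bijective renaming. -/
theorem star_identification
    (q p₁ p₂ : MCQ)
    (hpred₁ : p₁.head.pred = q.head.pred) (hpred₂ : p₂.head.pred = q.head.pred)
    (hn₁ : p₁.noNulls) (hn₂ : p₂.noNulls)
    (honce₁ : ∀ v ∈ p₁.varFinset, v ∉ q.varFinset → p₁.countVar v = 1)
    (honce₂ : ∀ v ∈ p₂.varFinset, v ∉ q.varFinset → p₂.countVar v = 1)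
    (hstar : p₁.subst (starSub q.varFinset) = p₂.subst (starSub q.varFinset)) :
    MCQEquiv p₁ p₂ := by
  classical
  set W := q.varFinset with hWdef
  set st := starSub W with hstdef
  have hhead : p₁.head.subst st = p₂.head.subst st := congrArg MCQ.head hstar
  have hbodyM : p₁.body.map (Atom.subst st) = p₂.body.map (Atom.subst st) :=
    congrArg MCQ.body hstar
  have hrel : Multiset.Rel (fun a b => a.subst st = b.subst st) p₁.body p₂.body := by
    have h0 := Multiset.rel_eq.mpr hbodyM
    rw [Multiset.rel_map_left, Multiset.rel_map_right] at h0
    exact h0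
  obtain ⟨L₁, L₂, hL₁, hL₂, hFa⟩ := rel_exists_lists hrel
  set T₁ : List Term := p₁.head.args ++ L₁.flatMap Atom.args with hT₁def
  set T₂ : List Term := p₂.head.args ++ L₂.flatMap Atom.args with hT₂def
  have hheadargs : p₁.head.args.map st = p₂.head.args.map st := by
    have := congrArg Atom.args hhead; simpa [Atom.subst] using this
  have hT : T₁.map st = T₂.map st := by
    rw [hT₁def, hT₂def, List.map_append, List.map_append, hheadargs, flatMap_star_eq st hFa]
  have hlen : T₁.length = T₂.length := by
    have := congrArg List.length hT; simpa using this
  have hnn₁ : ∀ t ∈ T₁, t.noNull := by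
    intro t ht
    rcases List.mem_append.mp ht with h | h
    · exact hn₁.1 t h
    · obtain ⟨a, ha, h⟩ := List.mem_flatMap.mp h
      exact hn₁.2 a (by rw [hL₁]; exact Multiset.mem_coe.mpr ha) t h
  have hnn₂ : ∀ t ∈ T₂, t.noNull := by
    intro t ht
    rcases List.mem_append.mp ht with h | h
    · exact hn₂.1 t h
    · obtain ⟨a, ha, h⟩ := List.mem_flatMap.mp h
      exact hn₂.2 a (by rw [hL₂]; exact Multiset.mem_coe.mpr ha) t h
  have hpt : ∀ (i : ℕ) (t₁ t₂ : Term), T₁[i]? = some t₁ → T₂[i]? = some t₂ → st t₁ = st t₂ := by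
    intro i t₁ t₂ h1 h2
    have e1 : (T₁.map st)[i]? = some (st t₁) := by simp [List.getElem?_map, h1]
    have e2 : (T₂.map st)[i]? = some (st t₂) := by simp [List.getElem?_map, h2]
    rw [hT] at e1; rw [e1] at e2; exact Option.some.inj e2
  have hcnt₁ : ∀ v, Term.var v ∈ T₁ → v ∉ W → T₁.count (Term.var v) = 1 := by
    intro v hv hw
    rw [← countVar_eq hL₁]
    exact honce₁ v (mem_varFinset_of hL₁ hv) hw
  have hcnt₂ : ∀ v, Term.var v ∈ T₂ → v ∉ W → T₂.count (Term.var v) = 1 := by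
    intro v hv hw
    rw [← countVar_eq hL₂]
    exact honce₂ v (mem_varFinset_of hL₂ hv) hw
  set R : ℕ → ℕ → Prop :=
    fun x y => ∃ i : ℕ, T₁[i]? = some (Term.var x) ∧ T₂[i]? = some (Term.var y) with hRdef
  have hRuniq : ∀ x y y', x ∉ W → R x y → R x y' → y = y' := by
    rintro x y y' hw ⟨i, hi1, hi2⟩ ⟨j, hj1, hj2⟩
    have hij : i = j :=
      eq_of_count_one (hcnt₁ x (List.mem_of_getElem? hi1) hw) hi1 hj1
    subst hij
    rw [hi2] at hj2
    injection hj2 with h; injection h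
  have hRuniqL : ∀ x x' y, y ∉ W → R x y → R x' y → x = x' := by
    rintro x x' y hw ⟨i, hi1, hi2⟩ ⟨j, hj1, hj2⟩
    have hij : i = j :=
      eq_of_count_one (hcnt₂ y (List.mem_of_getElem? hi2) hw) hi2 hj2
    subst hij
    rw [hi1] at hj1
    injection hj1 with h; injection h
  have hRtot₁ : ∀ x ∈ freshVars W T₁, ∃ y, R x y ∧ y ∈ freshVars W T₂ := by
    intro x hx
    rw [mem_freshVars] at hx
    obtain ⟨i, hi⟩ := List.mem_iff_getElem?.mp hx.1
    have hilt : i < T₂.length := by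
      rw [← hlen]; exact (List.getElem?_eq_some_iff.mp hi).1
    obtain ⟨t₂, ht₂⟩ : ∃ t₂, T₂[i]? = some t₂ := ⟨T₂[i], List.getElem?_eq_getElem hilt⟩
    have hst := hpt i _ _ hi ht₂
    rcases star_cases (hnn₁ _ (List.mem_of_getElem? hi)) (hnn₂ _ (List.mem_of_getElem? ht₂)) hst with
      ⟨c, hc1, _⟩ | ⟨v, hv, hv1, _⟩ | ⟨x', y, hx', hy, hx1, hy1⟩
    · exact absurd hc1 (by simp)
    · exact absurd (show x ∈ W by injection hv1 with h; rw [h]; exact hv) hx.2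
    · refine ⟨y, ⟨i, by rw [hi, hx1], by rw [ht₂, hy1]⟩, ?_⟩
      rw [mem_freshVars]
      exact ⟨by rw [hy1] at ht₂; exact List.mem_of_getElem? ht₂, hy⟩
  have hRtot₂ : ∀ y ∈ freshVars W T₂, ∃ x, R x y ∧ x ∈ freshVars W T₁ := by
    intro y hy
    rw [mem_freshVars] at hy
    obtain ⟨i, hi⟩ := List.mem_iff_getElem?.mp hy.1
    have hilt : i < T₁.length := by
      rw [hlen]; exact (List.getElem?_eq_some_iff.mp hi).1
    obtain ⟨t₁, ht₁⟩ : ∃ t₁, T₁[i]? = some t₁ := ⟨T₁[i], List.getElem?_eq_getElem hilt⟩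
    have hst := hpt i _ _ ht₁ hi
    rcases star_cases (hnn₁ _ (List.mem_of_getElem? ht₁)) (hnn₂ _ (List.mem_of_getElem? hi)) hst with
      ⟨c, _, hc2⟩ | ⟨v, hv, _, hv2⟩ | ⟨x, y', hx, hy', hx1, hy1⟩
    · exact absurd hc2 (by simp)
    · exact absurd (show y ∈ W by injection hv2 with h; rw [h]; exact hv) hy.2
    · refine ⟨x, ⟨i, by rw [ht₁, hx1], by rw [hi, hy1]⟩, ?_⟩
      rw [mem_freshVars]
      exact ⟨by rw [hx1] at ht₁; exact List.mem_of_getElem? ht₁, hx⟩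
  set f : ℕ → ℕ :=
    fun x => if h : ∃ y, R x y ∧ y ∈ freshVars W T₂ then h.choose else x with hfdef
  set g : ℕ → ℕ :=
    fun y => if h : ∃ x, R x y ∧ x ∈ freshVars W T₁ then h.choose else y with hgdef
  have hf : ∀ x ∈ freshVars W T₁, R x (f x) ∧ f x ∈ freshVars W T₂ := by
    intro x hx
    have h := hRtot₁ x hx
    simp only [hfdef]
    rw [dif_pos h]
    exact h.choose_spec
  have hg : ∀ y ∈ freshVars W T₂, R (g y) y ∧ g y ∈ freshVars W T₁ := by
    intro y hy
    have h := hRtot₂ y hy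
    simp only [hgdef]
    rw [dif_pos h]
    exact h.choose_spec
  have hnW₁ : ∀ x ∈ freshVars W T₁, x ∉ W := fun x hx => (mem_freshVars.mp hx).2
  have hnW₂ : ∀ y ∈ freshVars W T₂, y ∉ W := fun y hy => (mem_freshVars.mp hy).2
  have hgf : ∀ x ∈ freshVars W T₁, g (f x) = x := by
    intro x hx
    have h1 := hf x hx
    have h2 := hg (f x) h1.2
    exact hRuniqL _ _ _ (hnW₂ _ h1.2) h2.1 h1.1
  have hfg : ∀ y ∈ freshVars W T₂, f (g y) = y := by
    intro y hy
    have h1 := hg y hy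
    have h2 := hf (g y) h1.2
    exact hRuniq _ _ _ (hnW₁ _ h1.2) h2.1 h1.1
  have hcard : (freshVars W T₁).card = (freshVars W T₂).card :=
    Finset.card_bij (fun x _ => f x) (fun x hx => (hf x hx).2)
      (fun x hx x' hx' he => by
        have he' : f x = f x' := he
        rw [← hgf x hx, ← hgf x' hx', he'])
      (fun y hy => ⟨g y, (hg y hy).2, hfg y hy⟩)
  have hcard2 : (freshVars W T₂ \ freshVars W T₁).card =
      (freshVars W T₁ \ freshVars W T₂).card :=
    Finset.card_sdiff_comm hcard.symm
  set e := Finset.equivOfCardEq hcard2 with hedef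
  set ρ : ℕ → ℕ := fun v =>
    if h1 : v ∈ freshVars W T₁ then f v
    else if h2 : v ∈ freshVars W T₂ then (e ⟨v, Finset.mem_sdiff.mpr ⟨h2, h1⟩⟩ : ℕ)
    else v with hρdef
  set ρ' : ℕ → ℕ := fun v =>
    if h1 : v ∈ freshVars W T₂ then g v
    else if h2 : v ∈ freshVars W T₁ then (e.symm ⟨v, Finset.mem_sdiff.mpr ⟨h2, h1⟩⟩ : ℕ)
    else v with hρ'def
  have hρ₁ : ∀ v ∈ freshVars W T₁, ρ v = f v := by
    intro v hv; simp only [hρdef]; rw [dif_pos hv]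
  have hρid : ∀ v, v ∉ freshVars W T₁ → v ∉ freshVars W T₂ → ρ v = v := by
    intro v h1 h2; simp only [hρdef]; rw [dif_neg h1, dif_neg h2]
  have hbij : Function.Bijective ρ := by
    rw [Function.bijective_iff_has_inverse]
    refine ⟨ρ', ?_, ?_⟩
    · intro v
      by_cases h1 : v ∈ freshVars W T₁
      · rw [hρ₁ v h1]
        have h2 := (hf v h1).2
        simp only [hρ'def]; rw [dif_pos h2]
        exact hgf v h1
      · by_cases h2 : v ∈ freshVars W T₂
        · have hmem : v ∈ freshVars W T₂ \ freshVars W T₁ := Finset.mem_sdiff.mpr ⟨h2, h1⟩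
          have hρv : ρ v = ↑(e ⟨v, hmem⟩) := by
            simp only [hρdef]; rw [dif_neg h1, dif_pos h2]
          rw [hρv]
          have hprop := (e ⟨v, hmem⟩).2
          rw [Finset.mem_sdiff] at hprop
          simp only [hρ'def]; rw [dif_neg hprop.2, dif_pos hprop.1]
          have heq : (⟨↑(e ⟨v, hmem⟩), Finset.mem_sdiff.mpr ⟨hprop.1, hprop.2⟩⟩ :
              {x // x ∈ freshVars W T₁ \ freshVars W T₂}) = e ⟨v, hmem⟩ := Subtype.ext rfl
          rw [heq, Equiv.symm_apply_apply]
        · rw [hρid v h1 h2]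
          simp only [hρ'def]; rw [dif_neg h2, dif_neg h1]
    · intro v
      by_cases h2 : v ∈ freshVars W T₂
      · have hρ'v : ρ' v = g v := by simp only [hρ'def]; rw [dif_pos h2]
        rw [hρ'v, hρ₁ _ (hg v h2).2]
        exact hfg v h2
      · by_cases h1 : v ∈ freshVars W T₁
        · have hmem : v ∈ freshVars W T₁ \ freshVars W T₂ := Finset.mem_sdiff.mpr ⟨h1, h2⟩
          have hρ'v : ρ' v = ↑(e.symm ⟨v, hmem⟩) := by
            simp only [hρ'def]; rw [dif_neg h2, dif_pos h1]
          rw [hρ'v]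
          have hprop := (e.symm ⟨v, hmem⟩).2
          rw [Finset.mem_sdiff] at hprop
          simp only [hρdef]; rw [dif_neg hprop.2, dif_pos hprop.1]
          have heq : (⟨↑(e.symm ⟨v, hmem⟩), Finset.mem_sdiff.mpr ⟨hprop.1, hprop.2⟩⟩ :
              {x // x ∈ freshVars W T₂ \ freshVars W T₁}) = e.symm ⟨v, hmem⟩ := Subtype.ext rfl
          rw [heq, Equiv.apply_symm_apply]
        · rw [show ρ' v = v by simp only [hρ'def]; rw [dif_neg h2, dif_neg h1]]
          exact hρid v h1 h2
  have hrenT : ∀ i : ℕ, (T₁.map (renT ρ))[i]? = T₂[i]? := by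
    intro i
    rw [List.getElem?_map]
    cases h1 : T₁[i]? with
    | none =>
      have hle : T₂.length ≤ i := by
        rw [← hlen]; exact List.getElem?_eq_none_iff.mp h1
      rw [List.getElem?_eq_none_iff.mpr hle]; rfl
    | some t₁ =>
      have hilt : i < T₂.length := by
        rw [← hlen]; exact (List.getElem?_eq_some_iff.mp h1).1
      obtain ⟨t₂, h2⟩ : ∃ t₂, T₂[i]? = some t₂ := ⟨T₂[i], List.getElem?_eq_getElem hilt⟩
      rw [h2]
      have hst := hpt i _ _ h1 h2
      rcases star_cases (hnn₁ _ (List.mem_of_getElem? h1)) (hnn₂ _ (List.mem_of_getElem? h2)) hst with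
        ⟨c, hc1, hc2⟩ | ⟨v, hv, hv1, hv2⟩ | ⟨x, y, hx, hy, hx1, hy1⟩
      · rw [hc1, hc2]; rfl
      · rw [hv1, hv2]
        have h1' : v ∉ freshVars W T₁ := fun hh => (mem_freshVars.mp hh).2 hv
        have h2' : v ∉ freshVars W T₂ := fun hh => (mem_freshVars.mp hh).2 hv
        simp [renT, hρid v h1' h2']
      · rw [hx1, hy1]
        have hxF : x ∈ freshVars W T₁ :=
          mem_freshVars.mpr ⟨by rw [hx1] at h1; exact List.mem_of_getElem? h1, hx⟩
        have hfx := (hf x hxF).1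
        have hfxy : f x = y :=
          hRuniq x (f x) y hx hfx ⟨i, by rw [h1, hx1], by rw [h2, hy1]⟩
        simp [renT, hρ₁ x hxF, hfxy]
  have hmapT : T₁.map (renT ρ) = T₂ := List.ext_getElem? hrenT
  have hheadlen : (p₁.head.args.map (renT ρ)).length = p₂.head.args.length := by
    have := congrArg List.length hheadargs; simpa using this
  rw [hT₁def, hT₂def, List.map_append] at hmapT
  obtain ⟨hhead2, hbody2⟩ := List.append_inj hmapT hheadlen
  refine ⟨ρ, hbij, ?_⟩
  have hpred12 : p₁.head.pred = p₂.head.pred := hpred₁.trans hpred₂.symm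
  have hH : p₁.head.subst (renT ρ) = p₂.head := by
    show Atom.mk p₁.head.pred (p₁.head.args.map (renT ρ)) = p₂.head
    rw [hpred12, hhead2]
  have hB : p₁.body.map (Atom.subst (renT ρ)) = p₂.body := by
    rw [hL₁, hL₂, Multiset.map_coe, body_reconstruct st (renT ρ) hFa hbody2]
  show MCQ.mk (p₁.head.subst (renT ρ)) (p₁.body.map (Atom.subst (renT ρ))) = p₂
  rw [hH, hB]


end OntDB
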